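/- arXiv:2002.07354 — 4 statements merged into one kernel-verified Lean document; each statement's English description precedes it below -/
import Mathlib

section
/- Let E be a real normed space, S ⊆ E a convex set, φ : E → ℝ a continuous linear map, b ∈ ℝ, and define the affine function f(x) = φ(x) + b. Let g : E → ℝ be convex on S, differentiable at a point x* ∈ S with Fréchet derivative g'(x*), and suppose g(x) > 0 for all x ∈ S and f(x*) ≥ 0. If the stationarity condition φ = (f(x*)/g(x*))·g'(x*) holds (equality of continuous linear maps, i.e. x* is a stationary point of f/g), then f(x)/g(x) ≤ f(x*)/g(x*) for every x ∈ S; that is, every stationary point of the ratio f/g is a global maximum over S. -/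
/-! Write `ρ = f x* / g x*`. Stationarity makes `f` affine with linear part `ρ • g'`, so
`f x - f x* = ρ g'(x - x*)`. The first-order condition `g'(x - x*) ≤ g x - g x*` for the convex
`g`, multiplied by `ρ ≥ 0`, turns this into `f x ≤ ρ g x`, i.e. `f x / g x ≤ ρ` since `g x > 0`. -/

open AffineMap in
theorem ConvexOn.le_sub_of_hasFDerivAt {E : Type*} [NormedAddCommGroup E] [NormedSpace ℝ E]
    {S : Set E} {g : E → ℝ} {g' : E →L[ℝ] ℝ} {x y : E} (hg : ConvexOn ℝ S g)
    (hx : x ∈ S) (hy : y ∈ S) (hg' : HasFDerivAt g g' x) :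
    g' (y - x) ≤ g y - g x := by
  set ℓ : ℝ →ᵃ[ℝ] E := lineMap x y
  have hline : ConvexOn ℝ (ℓ ⁻¹' S) (g ∘ ℓ) := hg.comp_affineMap ℓ
  have hderiv : HasDerivAt (g ∘ ℓ) (g' (y - x)) 0 :=
    (lineMap_apply_zero (k := ℝ) x y ▸ hg').comp_hasDerivAt 0 hasDerivAt_lineMap
  have h := hline.le_slope_of_hasDerivAt (by simpa [ℓ] using hx) (by simpa [ℓ] using hy)
    one_pos hderiv
  simpa [ℓ, slope_def_field] using h

theorem div_le_div_of_sub_le_div_mul_sub {K : Type*} [Field K] [LinearOrder K]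
    [IsStrictOrderedRing K] {a b c d : K} (hc : 0 < c) (hd : 0 < d)
    (h : a - b ≤ b / d * (c - d)) : a / c ≤ b / d := by
  rw [div_le_iff₀ hc]
  have : b / d * d = b := div_mul_cancel₀ b hd.ne'
  linarith

theorem ratio_affine_div_convex_stationary_global_max_general
    {E : Type*} [NormedAddCommGroup E] [NormedSpace ℝ E]
    {S : Set E}
    (φ : E →L[ℝ] ℝ) (b : ℝ) (f : E → ℝ) (hf : ∀ x, f x = φ x + b)
    (g : E → ℝ) (hg : ConvexOn ℝ S g) (hg0 : ∀ x ∈ S, 0 < g x)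
    (xstar : E) (hxstar : xstar ∈ S) (hfstar : 0 ≤ f xstar)
    (g' : E →L[ℝ] ℝ) (hg' : HasFDerivAt g g' xstar)
    (hstat : φ = (f xstar / g xstar) • g') :
    ∀ x ∈ S, f x / g x ≤ f xstar / g xstar := by
  intro x hx
  have hgstar : 0 < g xstar := hg0 xstar hxstar
  have hincrement : f x - f xstar = f xstar / g xstar * g' (x - xstar) := by
    conv_lhs => rw [hf x, hf xstar, add_sub_add_right_eq_sub, ← map_sub, hstat]
    rfl
  refine div_le_div_of_sub_le_div_mul_sub (hg0 x hx) hgstar ?_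
  rw [hincrement]
  exact mul_le_mul_of_nonneg_left (hg.le_sub_of_hasFDerivAt hxstar hx hg')
    (div_nonneg hfstar hgstar.le)

/-- Pseudoconcavity part of Theorem 3: for an affine nonnegative numerator `f = φ + b` and
a convex positive denominator `g`, any stationary point `x*` of the ratio `f/g`
(where `φ = (f x*/g x*) • g'(x*)`) is a global maximum of `f/g` over the convex set `S`. -/
theorem ratio_affine_div_convex_stationary_global_max
    {E : Type*} [NormedAddCommGroup E] [NormedSpace ℝ E]
    {S : Set E} (hS : Convex ℝ S)
    (φ : E →L[ℝ] ℝ) (b : ℝ) (f : E → ℝ) (hf : ∀ x, f x = φ x + b)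
    (g : E → ℝ) (hg : ConvexOn ℝ S g) (hg0 : ∀ x ∈ S, 0 < g x)
    (xstar : E) (hxstar : xstar ∈ S) (hfstar : 0 ≤ f xstar)
    (g' : E →L[ℝ] ℝ) (hg' : HasFDerivAt g g' xstar)
    (hstat : φ = (f xstar / g xstar) • g') :
    ∀ x ∈ S, f x / g x ≤ f xstar / g xstar :=
  ratio_affine_div_convex_stationary_global_max_general φ b f hf g hg hg0 xstar hxstar hfstar g' hg'
    hstat
end

section
/- Let S be a nonempty set (the feasible set), K a nonempty finite index set, and for each k ∈ K let f_k, g_k : S → ℝ be functions with g_k(x) > 0 for every x ∈ S and k ∈ K. For x ∈ S write η(x) = min_{k∈K} f_k(x)/g_k(x). Then for every a ∈ S: (i) min_{k∈K} (f_k(a) − η(a)·g_k(a)) = 0; and (ii) for every x ∈ S that maximizes x ↦ min_{k∈K}(f_k(x) − η(a)·g_k(x)) over S, the maximum value min_{k∈K}(f_k(x) − η(a)·g_k(x)) is ≥ 0, with equality if a itself is such a maximizer. -/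
/-- Lemma 3 of the paper (Dinkelbach-type): with `η(x) = min_k f_k(x)/g_k(x)` and positive
denominators, (i) `min_k (f_k(a) − η(a)·g_k(a)) = 0` for every feasible `a`; (ii) every
maximizer of `x ↦ min_k (f_k(x) − η(a)·g_k(x))` has objective value `≥ 0`, with equality
when `a` itself is a maximizer. -/
theorem dinkelbach_lemma_F_nonneg
    {S K : Type*} [Nonempty S] [Fintype K] [Nonempty K]
    (f g : K → S → ℝ) (hg : ∀ k x, 0 < g k x)
    (η : S → ℝ)
    (hη : ∀ x, η x = Finset.univ.inf' Finset.univ_nonempty (fun k => f k x / g k x))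
    (a : S) :
    Finset.univ.inf' Finset.univ_nonempty (fun k => f k a - η a * g k a) = 0 ∧
    (∀ x : S,
        (∀ y : S,
            Finset.univ.inf' Finset.univ_nonempty (fun k => f k y - η a * g k y) ≤
              Finset.univ.inf' Finset.univ_nonempty (fun k => f k x - η a * g k x)) →
        0 ≤ Finset.univ.inf' Finset.univ_nonempty (fun k => f k x - η a * g k x)) ∧
    ((∀ y : S,
        Finset.univ.inf' Finset.univ_nonempty (fun k => f k y - η a * g k y) ≤
          Finset.univ.inf' Finset.univ_nonempty (fun k => f k a - η a * g k a)) →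
      Finset.univ.inf' Finset.univ_nonempty (fun k => f k a - η a * g k a) = 0) := by

  have key : Finset.univ.inf' Finset.univ_nonempty (fun k => f k a - η a * g k a) = 0 := by
    obtain ⟨k₀, -, hk₀⟩ := Finset.exists_mem_eq_inf' (Finset.univ_nonempty)
      (fun k : K => f k a / g k a)
    have heq : η a = f k₀ a / g k₀ a := by rw [hη]; exact hk₀
    apply le_antisymm
    · calc Finset.univ.inf' Finset.univ_nonempty (fun k => f k a - η a * g k a)
          ≤ f k₀ a - η a * g k₀ a := Finset.inf'_le _ (Finset.mem_univ k₀)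
      _ = 0 := by
          rw [heq]
          rw [div_mul_cancel₀ _ (ne_of_gt (hg k₀ a)), sub_self]
    · apply Finset.le_inf'
      intro k _
      have h1 : η a ≤ f k a / g k a := by rw [hη]; exact Finset.inf'_le _ (Finset.mem_univ k)
      have := (le_div_iff₀ (hg k a)).mp h1
      linarith
  refine ⟨key, fun x hx => ?_, fun _ => key⟩
  calc (0:ℝ) = Finset.univ.inf' Finset.univ_nonempty (fun k => f k a - η a * g k a) := key.symm
    _ ≤ _ := hx a
end

section
/- Let S be a nonempty set (the feasible set), K a nonempty finite index set, and for each k ∈ K let f_k, g_k : S → ℝ be functions with g_k(x) > 0 for every x ∈ S and k ∈ K. For x ∈ S write η(x) = min_{k∈K} f_k(x)/g_k(x). Suppose x* ∈ S maximizes η over S, and set η* = η(x*). Then min_{k∈K}(f_k(x*) − η*·g_k(x*)) = 0 and, for every x ∈ S, min_{k∈K}(f_k(x) − η*·g_k(x)) ≤ 0; hence x* maximizes x ↦ min_{k∈K}(f_k(x) − η*·g_k(x)) over S. -/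
/-! With positive denominators, `φ k / ψ k ≥ c ↔ φ k - c * ψ k ≥ 0` termwise, so the sign of
`min_k (φ k - c * ψ k)` compares `c` with `min_k φ k / ψ k`. Taking `c = η*`: at `x*` both
comparisons hold, giving the value `0`, and at any `x` the inequality `η x ≤ η*` gives `≤ 0`. -/

namespace Finset

variable {K : Type*} {s : Finset K} (H : s.Nonempty) {φ ψ : K → ℝ} {c : ℝ}

theorem nonneg_inf'_sub_mul_iff_le_inf'_div (hψ : ∀ k ∈ s, 0 < ψ k) :
    0 ≤ s.inf' H (fun k => φ k - c * ψ k) ↔ c ≤ s.inf' H (fun k => φ k / ψ k) := by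
  simp only [le_inf'_iff, sub_nonneg]
  exact forall₂_congr fun k hk => (le_div_iff₀ (hψ k hk)).symm

theorem inf'_sub_mul_nonpos_iff_inf'_div_le (hψ : ∀ k ∈ s, 0 < ψ k) :
    s.inf' H (fun k => φ k - c * ψ k) ≤ 0 ↔ s.inf' H (fun k => φ k / ψ k) ≤ c := by
  simp only [inf'_le_iff, sub_nonpos]
  exact exists_congr fun k => and_congr_right fun hk => (div_le_iff₀ (hψ k hk)).symm

end Finset

theorem dinkelbach_sufficiency_general
    {S K : Type*} [Fintype K] [Nonempty K]
    (f g : K → S → ℝ) (hg : ∀ k x, 0 < g k x)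
    (η : S → ℝ)
    (hη : ∀ x, η x = Finset.univ.inf' Finset.univ_nonempty (fun k => f k x / g k x))
    (xstar : S) (hmax : ∀ x : S, η x ≤ η xstar) :
    Finset.univ.inf' Finset.univ_nonempty
        (fun k => f k xstar - η xstar * g k xstar) = 0 ∧
      ∀ x : S,
        Finset.univ.inf' Finset.univ_nonempty (fun k => f k x - η xstar * g k x) ≤ 0 := by
  have nonpos (x : S) (c : ℝ) (hc : η x ≤ c) :
      Finset.univ.inf' Finset.univ_nonempty (fun k => f k x - c * g k x) ≤ 0 :=
    (Finset.inf'_sub_mul_nonpos_iff_inf'_div_le _ fun k _ => hg k x).2 (hη x ▸ hc)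
  refine ⟨le_antisymm (nonpos xstar _ le_rfl) ?_, fun x => nonpos x _ (hmax x)⟩
  exact (Finset.nonneg_inf'_sub_mul_iff_le_inf'_div _ fun k _ => hg k xstar).2 (hη xstar).le

/-- Sufficiency direction of Theorem 4 (Dinkelbach optimality for max-min fractional
programming): if `x*` maximizes `η(x) = min_k f_k(x)/g_k(x)` over `S` with optimal value
`η* = η(x*)`, then `min_k (f_k(x*) − η*·g_k(x*)) = 0` and `min_k (f_k(x) − η*·g_k(x)) ≤ 0`
for all `x ∈ S`; hence `x*` maximizes the parametric objective. -/
theorem dinkelbach_sufficiency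
    {S K : Type*} [Nonempty S] [Fintype K] [Nonempty K]
    (f g : K → S → ℝ) (hg : ∀ k x, 0 < g k x)
    (η : S → ℝ)
    (hη : ∀ x, η x = Finset.univ.inf' Finset.univ_nonempty (fun k => f k x / g k x))
    (xstar : S) (hmax : ∀ x : S, η x ≤ η xstar) :
    Finset.univ.inf' Finset.univ_nonempty
        (fun k => f k xstar - η xstar * g k xstar) = 0 ∧
      ∀ x : S,
        Finset.univ.inf' Finset.univ_nonempty (fun k => f k x - η xstar * g k x) ≤ 0 :=
  dinkelbach_sufficiency_general f g hg η hη xstar hmax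
end

section
/- Let S be a nonempty set (the feasible set), K a nonempty finite index set, and for each k ∈ K let f_k, g_k : S → ℝ be functions with g_k(x) > 0 for every x ∈ S and k ∈ K. For x ∈ S write η(x) = min_{k∈K} f_k(x)/g_k(x). Suppose x* ∈ S, set η* = η(x*), and suppose x* maximizes x ↦ min_{k∈K}(f_k(x) − η*·g_k(x)) over S. Then x* maximizes η over S, i.e. η(x) ≤ η* for every x ∈ S. -/
/-!
At the parameter `η* = η(x*)` the parametric objective vanishes at `x*`, so its maximality
there forces it to be `≤ 0` at every `x`. For positive denominators,
`min_k (f_k − c g_k) ≤ 0` holds exactly when `min_k f_k / g_k ≤ c`, hence `η(x) ≤ η*`.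
-/

theorem Finset.inf'_sub_mul_nonpos_iff {ι α : Type*} [Field α] [LinearOrder α]
    [IsStrictOrderedRing α] {s : Finset ι} (hs : s.Nonempty) {f g : ι → α}
    (hg : ∀ i ∈ s, 0 < g i) (c : α) :
    s.inf' hs (fun i => f i - c * g i) ≤ 0 ↔ s.inf' hs (fun i => f i / g i) ≤ c := by
  simp only [Finset.inf'_le_iff, sub_nonpos]
  refine exists_congr fun i => and_congr_right fun hi => ?_
  rw [div_le_iff₀ (hg i hi)]

theorem dinkelbach_necessity_general
    {S K : Type*} [Fintype K] [Nonempty K]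
    (f g : K → S → ℝ) (hg : ∀ k x, 0 < g k x)
    (η : S → ℝ)
    (hη : ∀ x, η x = Finset.univ.inf' Finset.univ_nonempty (fun k => f k x / g k x))
    (xstar : S)
    (hmax : ∀ x : S,
        Finset.univ.inf' Finset.univ_nonempty (fun k => f k x - η xstar * g k x) ≤
          Finset.univ.inf' Finset.univ_nonempty
            (fun k => f k xstar - η xstar * g k xstar)) :
    ∀ x : S, η x ≤ η xstar := by
  have parametric_nonpos_iff (x : S) :=
    Finset.inf'_sub_mul_nonpos_iff (f := (f · x)) Finset.univ_nonempty (fun k _ => hg k x)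
      (η xstar)
  intro x
  have hstar : Finset.univ.inf' Finset.univ_nonempty
      (fun k => f k xstar - η xstar * g k xstar) ≤ 0 :=
    (parametric_nonpos_iff xstar).2 (hη xstar).ge
  rw [hη x, ← parametric_nonpos_iff x]
  exact (hmax x).trans hstar

/-- Necessity direction of Theorem 4 (Dinkelbach optimality for max-min fractional
programming): if `x*` maximizes the parametric objective
`x ↦ min_k (f_k(x) − η*·g_k(x))` over `S` at the parameter `η* = η(x*)`, then `x*`
maximizes the fractional objective `η(x) = min_k f_k(x)/g_k(x)` over `S`. -/
theorem dinkelbach_necessity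
    {S K : Type*} [Nonempty S] [Fintype K] [Nonempty K]
    (f g : K → S → ℝ) (hg : ∀ k x, 0 < g k x)
    (η : S → ℝ)
    (hη : ∀ x, η x = Finset.univ.inf' Finset.univ_nonempty (fun k => f k x / g k x))
    (xstar : S)
    (hmax : ∀ x : S,
        Finset.univ.inf' Finset.univ_nonempty (fun k => f k x - η xstar * g k x) ≤
          Finset.univ.inf' Finset.univ_nonempty
            (fun k => f k xstar - η xstar * g k xstar)) :
    ∀ x : S, η x ≤ η xstar :=
  dinkelbach_necessity_general f g hg η hη xstar hmax
end
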